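/- arXiv:2211.05768 — 6 statements merged into one kernel-verified Lean document; each statement's English description precedes it below -/
import Mathlib

section
/- A 2-step nilpotent Lie algebra n is non-singular (i.e. ad(X): n → z is surjective for every X ∉ z) if and only if for some (equivalently, every) inner product on n, the map j(Z): v → v is invertible for every nonzero Z in the center z. -/
/-!
Fix a positive definite symmetric form `B` and split `X ∉ z` as `X₀ + V` with `X₀ ∈ z` and
`0 ≠ V ⊥ z`; then `ad X = ad V`. If `ad V` maps onto `z`, every `Z ∈ z` is `⁅V, W⁆` for some
`W ⊥ z`, and `B Z ⁅V, W⁆ = B Z Z > 0`. Conversely, if some `Z ∈ z` is missed by `ad V`, the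
component `Z₀` of `Z` orthogonal to the image of `ad V` (which lies in `z`, as `n` is 2-step) is a
nonzero central element with `B Z₀ ⁅V, W⁆ = 0` for all `W`, i.e. `j(Z₀) V = 0`. Both conditions
are thus equivalent for each `B`, and such a `B` exists, so "some" and "every" agree.
-/

open LinearMap (BilinForm)

theorem LinearMap.BilinForm.isCompl_orthogonal_of_pos {M : Type*} [AddCommGroup M] [Module ℝ M]
    [FiniteDimensional ℝ M] {B : BilinForm ℝ M} (hsym : ∀ x y, B x y = B y x)
    (hpos : ∀ x, x ≠ 0 → 0 < B x x) (W : Submodule ℝ M) : IsCompl W (B.orthogonal W) := by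
  refine (B.isCompl_orthogonal_iff_disjoint fun x y h => (hsym y x).trans h).mpr ?_
  refine Submodule.disjoint_def.mpr fun x hxW hxW' => ?_
  by_contra hx
  exact (hpos x hx).ne' (hxW' x hxW)

theorem LinearMap.BilinForm.exists_add_mem_orthogonal {M : Type*} [AddCommGroup M] [Module ℝ M]
    [FiniteDimensional ℝ M] {B : BilinForm ℝ M} (hsym : ∀ x y, B x y = B y x)
    (hpos : ∀ x, x ≠ 0 → 0 < B x x) (W : Submodule ℝ M) (x : M) :
    ∃ y w, y ∈ W ∧ w ∈ B.orthogonal W ∧ y + w = x :=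
  Submodule.codisjoint_iff_exists_add_eq.mp (isCompl_orthogonal_of_pos hsym hpos W).codisjoint x

theorem exists_bilinForm_symm_pos (M : Type*) [AddCommGroup M] [Module ℝ M]
    [FiniteDimensional ℝ M] :
    ∃ B : BilinForm ℝ M, (∀ x y, B x y = B y x) ∧ ∀ x, x ≠ 0 → 0 < B x x := by
  let e : M ≃ₗ[ℝ] EuclideanSpace ℝ (Fin (Module.finrank ℝ M)) :=
    (Module.finBasis ℝ M).equivFun.trans (WithLp.linearEquiv 2 ℝ _).symm
  refine ⟨(innerₗ _).compl₁₂ e.toLinearMap e.toLinearMap, fun x y => ?_, fun x hx => ?_⟩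
  · exact real_inner_comm (e y) (e x)
  · exact real_inner_self_pos.mpr (e.map_ne_zero_iff.mpr hx)

section TwoStep

variable {n : Type*} [LieRing n] [LieAlgebra ℝ n]

def IsNonsingular (z : Submodule ℝ n) : Prop :=
  ∀ X, X ∉ z → ∀ Z ∈ z, ∃ Y, ⁅X, Y⁆ = Z

/-- `B Z ⁅V, W⁆ = ⟪j(Z) V, W⟫`, so this says that each `j(Z)`, `Z ≠ 0`, is injective (hence
invertible) on `v = z^⊥`. -/
def JInjective (B : BilinForm ℝ n) (z : Submodule ℝ n) : Prop :=
  ∀ Z ∈ z, Z ≠ 0 → ∀ V, (∀ Z' ∈ z, B V Z' = 0) → V ≠ 0 →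
    ∃ W, (∀ Z' ∈ z, B W Z' = 0) ∧ B Z ⁅V, W⁆ ≠ 0

variable [FiniteDimensional ℝ n] {z : Submodule ℝ n} {B : BilinForm ℝ n}

theorem IsNonsingular.jInjective (hz : ∀ x, x ∈ z ↔ ∀ y : n, ⁅x, y⁆ = 0)
    (hsym : ∀ x y, B x y = B y x) (hpos : ∀ x, x ≠ 0 → 0 < B x x) (hns : IsNonsingular z) :
    JInjective B z := by
  intro Z hZ hZ0 V hV hV0
  have hVz : V ∉ z := fun hVz => (hpos V hV0).ne' (hV V hVz)
  obtain ⟨Y, rfl⟩ := hns V hVz Z hZ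
  obtain ⟨Y₀, W, hY₀, hW, rfl⟩ := B.exists_add_mem_orthogonal hsym hpos z Y
  have hVW : ⁅V, Y₀ + W⁆ = ⁅V, W⁆ := by
    rw [lie_add, ← lie_skew, (hz Y₀).mp hY₀ V, neg_zero, zero_add]
  rw [hVW] at hZ0 ⊢
  exact ⟨W, fun Z' hZ' => (hsym W Z').trans (hW Z' hZ'), (hpos _ hZ0).ne'⟩

theorem JInjective.isNonsingular (h2step : ∀ u v w : n, ⁅⁅u, v⁆, w⁆ = 0)
    (hz : ∀ x, x ∈ z ↔ ∀ y : n, ⁅x, y⁆ = 0) (hsym : ∀ x y, B x y = B y x)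
    (hpos : ∀ x, x ≠ 0 → 0 < B x x) (hj : JInjective B z) : IsNonsingular z := by
  intro X hX Z hZ
  obtain ⟨X₀, V, hX₀, hV, rfl⟩ := B.exists_add_mem_orthogonal hsym hpos z X
  have hV0 : V ≠ 0 := by
    rintro rfl
    exact hX (by rwa [add_zero])
  have hadV : ∀ Y : n, ⁅X₀ + V, Y⁆ = ⁅V, Y⁆ := fun Y => by
    rw [add_lie, (hz X₀).mp hX₀ Y, zero_add]
  simp only [hadV]
  by_contra hZV
  obtain ⟨r, Z₀, hr, hZ₀, rfl⟩ :=
    B.exists_add_mem_orthogonal hsym hpos (LinearMap.range (LieAlgebra.ad ℝ n V)) Z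
  obtain ⟨Y, rfl⟩ := hr
  have hrz : ⁅V, Y⁆ ∈ z := (hz _).mpr (h2step V Y)
  have hZ₀z : Z₀ ∈ z := by simpa using z.sub_mem hZ hrz
  have hZ₀0 : Z₀ ≠ 0 := by
    rintro rfl
    exact hZV ⟨Y, by rw [add_zero, LieAlgebra.ad_apply]⟩
  obtain ⟨W, -, hW⟩ := hj Z₀ hZ₀z hZ₀0 V (fun Z' hZ' => (hsym V Z').trans (hV Z' hZ')) hV0
  exact hW ((hsym _ _).trans (hZ₀ _ ⟨W, LieAlgebra.ad_apply ℝ n V W⟩))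

theorem isNonsingular_iff_jInjective (h2step : ∀ u v w : n, ⁅⁅u, v⁆, w⁆ = 0)
    (hz : ∀ x, x ∈ z ↔ ∀ y : n, ⁅x, y⁆ = 0) (hsym : ∀ x y, B x y = B y x)
    (hpos : ∀ x, x ≠ 0 → 0 < B x x) : IsNonsingular z ↔ JInjective B z :=
  ⟨IsNonsingular.jInjective hz hsym hpos, JInjective.isNonsingular h2step hz hsym hpos⟩

end TwoStep

/-- A 2-step nilpotent real Lie algebra `n` with center `z` is non-singular
(`ad X : n → z` surjective for every `X ∉ z`) if and only if for every
(equivalently, for some) inner product `B` on `n`, the map `j(Z) : v → v`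
(where `v` is the `B`-orthogonal complement of `z`) is invertible for every
nonzero `Z ∈ z`.  Invertibility of the skew-symmetric map `j(Z)` on the
finite-dimensional space `v` is expressed as injectivity:
for every nonzero `V ∈ v` there is `W ∈ v` with `⟪j(Z)V, W⟫ = B Z ⁅V,W⁆ ≠ 0`. -/
theorem stmt_2 {n : Type*} [LieRing n] [LieAlgebra ℝ n] [FiniteDimensional ℝ n]
    (h2step : ∀ u v w : n, ⁅⁅u, v⁆, w⁆ = 0)
    (z : Submodule ℝ n) (hz : ∀ x : n, x ∈ z ↔ ∀ y : n, ⁅x, y⁆ = 0) :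
    ((∀ X : n, X ∉ z → ∀ Z ∈ z, ∃ Y : n, ⁅X, Y⁆ = Z) ↔
      (∀ B : n →ₗ[ℝ] n →ₗ[ℝ] ℝ, (∀ x y : n, B x y = B y x) →
        (∀ x : n, x ≠ 0 → 0 < B x x) →
        ∀ Z ∈ z, Z ≠ 0 → ∀ V : n, (∀ Z' ∈ z, B V Z' = 0) → V ≠ 0 →
          ∃ W : n, (∀ Z' ∈ z, B W Z' = 0) ∧ B Z ⁅V, W⁆ ≠ 0)) ∧
    ((∀ X : n, X ∉ z → ∀ Z ∈ z, ∃ Y : n, ⁅X, Y⁆ = Z) ↔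
      (∃ B : n →ₗ[ℝ] n →ₗ[ℝ] ℝ, (∀ x y : n, B x y = B y x) ∧
        (∀ x : n, x ≠ 0 → 0 < B x x) ∧
        ∀ Z ∈ z, Z ≠ 0 → ∀ V : n, (∀ Z' ∈ z, B V Z' = 0) → V ≠ 0 →
          ∃ W : n, (∀ Z' ∈ z, B W Z' = 0) ∧ B Z ⁅V, W⁆ ≠ 0)) := by
  have key := fun B hsym hpos => isNonsingular_iff_jInjective (B := B) h2step hz hsym hpos
  obtain ⟨B₀, hsym₀, hpos₀⟩ := exists_bilinForm_symm_pos n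
  refine ⟨⟨fun hns B hsym hpos => (key B hsym hpos).mp hns, fun hj => ?_⟩,
    ⟨fun hns => ⟨B₀, hsym₀, hpos₀, (key B₀ hsym₀ hpos₀).mp hns⟩, ?_⟩⟩
  · exact (key B₀ hsym₀ hpos₀).mpr (hj B₀ hsym₀ hpos₀)
  · rintro ⟨B, hsym, hpos, hj⟩
    exact (key B hsym hpos).mpr hj
end

section
/- If a 2-step nilpotent metric Lie algebra n admits a non-degenerate closed 2-form ω (a symplectic form), then the skew-symmetric Lorentz force F of ω has nonzero type-II component; equivalently, n admits a nonzero skew-symmetric map F₂ with F₂(v) ⊆ z, F₂(z) ⊆ v whose associated 2-form is closed and nonzero on z × n. -/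
/-!
Let `P` be the orthogonal projection onto the center `z` and `Q = 1 - P` the one onto `v = zᗮ`.
Since every bracket is central and the center brackets trivially with everything, closedness
of `ω = ⟪F ·, ·⟫` evaluated at `(U, V, w)` with `w ∈ z` gives `⟪F [U, V], w⟫ = 0`: `F` maps
`[n, n]` into `v`. Hence the type-II part `F₂ = P F Q + Q F P` agrees with `F` on brackets,
so it inherits closedness from `F`, and `F₂ [u, v] = F [u, v] ≠ 0` for a nonzero bracket,
by injectivity of `F`.
-/

open scoped RealInnerProductSpace

namespace Submodule

variable {E : Type*} [NormedAddCommGroup E] [InnerProductSpace ℝ E]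
  (K : Submodule ℝ E) [K.HasOrthogonalProjection]

/-- The type-II component `F₂` of `F` with respect to `E = Kᗮ ⊕ K`. -/
noncomputable def offDiagonalPart (F : E →ₗ[ℝ] E) : E →ₗ[ℝ] E :=
  K.starProjection ∘ₗ F ∘ₗ Kᗮ.starProjection + Kᗮ.starProjection ∘ₗ F ∘ₗ K.starProjection

variable {K}

theorem offDiagonalPart_apply_of_mem_orthogonal (F : E →ₗ[ℝ] E) {x : E} (hx : x ∈ Kᗮ) :
    K.offDiagonalPart F x = K.starProjection (F x) := by
  simp [offDiagonalPart, starProjection_eq_self_iff.mpr hx,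
    (starProjection_apply_eq_zero_iff K).mpr hx]

theorem offDiagonalPart_apply_of_mem (F : E →ₗ[ℝ] E) {x : E} (hx : x ∈ K) :
    K.offDiagonalPart F x = Kᗮ.starProjection (F x) := by
  have hx' : x ∈ Kᗮᗮ := le_orthogonal_orthogonal K hx
  simp [offDiagonalPart, starProjection_eq_self_iff.mpr hx,
    (starProjection_apply_eq_zero_iff Kᗮ).mpr hx']

theorem offDiagonalPart_apply_mem (F : E →ₗ[ℝ] E) {x : E} (hx : x ∈ Kᗮ) :
    K.offDiagonalPart F x ∈ K :=
  offDiagonalPart_apply_of_mem_orthogonal F hx ▸ K.starProjection_apply_mem _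

theorem offDiagonalPart_apply_mem_orthogonal (F : E →ₗ[ℝ] E) {x : E} (hx : x ∈ K) :
    K.offDiagonalPart F x ∈ Kᗮ :=
  offDiagonalPart_apply_of_mem F hx ▸ Kᗮ.starProjection_apply_mem _

theorem offDiagonalPart_apply_eq_self {F : E →ₗ[ℝ] E} {x : E} (hx : x ∈ K) (hFx : F x ∈ Kᗮ) :
    K.offDiagonalPart F x = F x := by
  rw [offDiagonalPart_apply_of_mem F hx, starProjection_eq_self_iff.mpr hFx]

theorem inner_offDiagonalPart_left {F : E →ₗ[ℝ] E} (hF : ∀ x y, ⟪F x, y⟫ = -⟪x, F y⟫)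
    (x y : E) : ⟪K.offDiagonalPart F x, y⟫ = -⟪x, K.offDiagonalPart F y⟫ := by
  simp only [offDiagonalPart, LinearMap.add_apply, LinearMap.comp_apply,
    ContinuousLinearMap.coe_coe, inner_add_left, inner_add_right,
    inner_starProjection_left_eq_right, hF]
  ring

end Submodule

section ClosedForm

variable {E : Type*} [NormedAddCommGroup E] [InnerProductSpace ℝ E]

theorem exists_inner_apply_ne_zero {F : E →ₗ[ℝ] E} (hinj : Function.Injective F) {x : E}
    (hx : x ≠ 0) : ∃ y, ⟪F x, y⟫ ≠ 0 :=
  ⟨F x, inner_self_ne_zero.2 ((F.map_eq_zero_iff hinj).not.2 hx)⟩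

/-- `ω = ⟪F ·, ·⟫` is closed for the bracket `b`: in the Chevalley–Eilenberg complex,
`dω (U, V, W) = -(ω (b U V, W) + ω (b V W, U) + ω (b W U, V))`. -/
def IsClosedForm (b : E → E → E) (F : E →ₗ[ℝ] E) : Prop :=
  ∀ U V W : E, ⟪F (b U V), W⟫ + ⟪F (b V W), U⟫ + ⟪F (b W U), V⟫ = 0

variable {b : E → E → E} {F : E →ₗ[ℝ] E}

theorem IsClosedForm.congr {G : E →ₗ[ℝ] E} (hF : IsClosedForm b F)
    (hG : ∀ U V, G (b U V) = F (b U V)) : IsClosedForm b G := by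
  simpa only [IsClosedForm, hG] using hF

/-- Closedness at `(a, a, a)` gives `⟪F c, a⟫ = 0` for every `a`. -/
theorem IsClosedForm.eq_zero_of_apply_self_eq {c : E} (hF : IsClosedForm b F)
    (hinj : Function.Injective F) (hb : ∀ a, b a a = c) : c = 0 := by
  have hFc : ⟪F c, F c⟫ = 0 := by
    have := hF (F c) (F c) (F c)
    rw [hb] at this
    linarith
  exact hinj (by rw [inner_self_eq_zero.mp hFc, map_zero])

theorem IsClosedForm.apply_mem_orthogonal {K : Submodule ℝ E} (hF : IsClosedForm b F)
    (hK : ∀ w ∈ K, ∀ x, b w x = 0 ∧ b x w = 0) (U V : E) : F (b U V) ∈ Kᗮ := by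
  intro w hw
  have := hF U V w
  rw [(hK w hw V).2, (hK w hw U).1, map_zero, inner_zero_left, inner_zero_left] at this
  rw [real_inner_comm]
  linarith

end ClosedForm

theorem stmt_8_general {n : Type*} [LieRing n]
    [NormedAddCommGroup n] [InnerProductSpace ℝ n] [@FiniteDimensional ℝ n _ (NormedAddCommGroup.toAddCommGroup (E := n)) (InnerProductSpace.toNormedSpace (𝕜 := ℝ) (E := n)).toModule]
    (h2step : ∀ u v w : n, ⁅⁅u, v⁆, w⁆ = 0)
    (hna : ∃ u v : n, ⁅u, v⁆ ≠ 0)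
    (z : @Submodule ℝ n _ (NormedAddCommGroup.toAddCommGroup (E := n)).toAddCommMonoid (InnerProductSpace.toNormedSpace (𝕜 := ℝ) (E := n)).toModule) (hz : ∀ x : n, x ∈ z ↔ ∀ y : n, ⁅x, y⁆ = 0)
    (hsymp : ∃ F : @LinearMap ℝ ℝ _ _ (RingHom.id ℝ) n n (NormedAddCommGroup.toAddCommGroup (E := n)).toAddCommMonoid (NormedAddCommGroup.toAddCommGroup (E := n)).toAddCommMonoid (InnerProductSpace.toNormedSpace (𝕜 := ℝ) (E := n)).toModule (InnerProductSpace.toNormedSpace (𝕜 := ℝ) (E := n)).toModule, (∀ x y : n, ⟪F x, y⟫ = -⟪x, F y⟫) ∧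
      Function.Bijective F ∧
      ∀ U V W : n, ⟪F ⁅U, V⁆, W⟫ + ⟪F ⁅V, W⁆, U⟫ + ⟪F ⁅W, U⁆, V⟫ = 0) :
    ∃ F₂ : @LinearMap ℝ ℝ _ _ (RingHom.id ℝ) n n (NormedAddCommGroup.toAddCommGroup (E := n)).toAddCommMonoid (NormedAddCommGroup.toAddCommGroup (E := n)).toAddCommMonoid (InnerProductSpace.toNormedSpace (𝕜 := ℝ) (E := n)).toModule (InnerProductSpace.toNormedSpace (𝕜 := ℝ) (E := n)).toModule, (∀ x y : n, ⟪F₂ x, y⟫ = -⟪x, F₂ y⟫) ∧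
      (∀ x ∈ zᗮ, F₂ x ∈ z) ∧ (∀ x ∈ z, F₂ x ∈ zᗮ) ∧
      (∀ U V W : n, ⟪F₂ ⁅U, V⁆, W⟫ + ⟪F₂ ⁅V, W⁆, U⟫ + ⟪F₂ ⁅W, U⁆, V⟫ = 0) ∧
      (∃ Z ∈ z, ∃ U : n, ⟪F₂ Z, U⟫ ≠ 0) := by
  obtain ⟨F, hskew, hbij, hclosed : IsClosedForm (fun U V => ⁅U, V⁆) F⟩ := hsymp
  -- `n` carries two additive structures, the Lie ring's and the normed group's; `hzero`
  -- identifies their zeros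
  have hzero := hclosed.eq_zero_of_apply_self_eq hbij.1 lie_self
  have hbracket : ∀ U V : n, ⁅U, V⁆ ∈ z := fun U V => (hz _).2 (h2step U V)
  have hFbracket : ∀ U V : n, F ⁅U, V⁆ ∈ zᗮ := hclosed.apply_mem_orthogonal fun w hw x =>
    ⟨((hz w).1 hw x).trans hzero, by rw [← lie_skew, (hz w).1 hw x, neg_zero]; exact hzero⟩
  have hF₂ : ∀ U V : n, z.offDiagonalPart F ⁅U, V⁆ = F ⁅U, V⁆ := fun U V =>
    Submodule.offDiagonalPart_apply_eq_self (hbracket U V) (hFbracket U V)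
  obtain ⟨u, v, huv⟩ := hna
  refine ⟨z.offDiagonalPart F, Submodule.inner_offDiagonalPart_left hskew,
    fun _ => Submodule.offDiagonalPart_apply_mem F,
    fun _ => Submodule.offDiagonalPart_apply_mem_orthogonal F,
    hclosed.congr hF₂, ⁅u, v⁆, hbracket u v, ?_⟩
  rw [hF₂]
  exact exists_inner_apply_ne_zero hbij.1 (by rwa [← hzero])

/-- If a (non-abelian) 2-step nilpotent metric Lie algebra `n = v ⊕ z` admits a
non-degenerate closed 2-form (a symplectic form `ω = ⟪F·,·⟫` with `F` skew-symmetric and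
invertible), then `n` admits a nonzero skew-symmetric map `F₂` of type II
(`F₂(v) ⊆ z`, `F₂(z) ⊆ v`) whose associated 2-form is closed and nonzero on `z × n`. -/
theorem stmt_8 {n : Type*} [LieRing n] [LieAlgebra ℝ n]
    [NormedAddCommGroup n] [InnerProductSpace ℝ n] [@FiniteDimensional ℝ n _ (NormedAddCommGroup.toAddCommGroup (E := n)) (InnerProductSpace.toNormedSpace (𝕜 := ℝ) (E := n)).toModule]
    (h2step : ∀ u v w : n, ⁅⁅u, v⁆, w⁆ = 0)
    (hna : ∃ u v : n, ⁅u, v⁆ ≠ 0)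
    (z : @Submodule ℝ n _ (NormedAddCommGroup.toAddCommGroup (E := n)).toAddCommMonoid (InnerProductSpace.toNormedSpace (𝕜 := ℝ) (E := n)).toModule) (hz : ∀ x : n, x ∈ z ↔ ∀ y : n, ⁅x, y⁆ = 0)
    (hsymp : ∃ F : @LinearMap ℝ ℝ _ _ (RingHom.id ℝ) n n (NormedAddCommGroup.toAddCommGroup (E := n)).toAddCommMonoid (NormedAddCommGroup.toAddCommGroup (E := n)).toAddCommMonoid (InnerProductSpace.toNormedSpace (𝕜 := ℝ) (E := n)).toModule (InnerProductSpace.toNormedSpace (𝕜 := ℝ) (E := n)).toModule, (∀ x y : n, ⟪F x, y⟫ = -⟪x, F y⟫) ∧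
      Function.Bijective F ∧
      ∀ U V W : n, ⟪F ⁅U, V⁆, W⟫ + ⟪F ⁅V, W⁆, U⟫ + ⟪F ⁅W, U⁆, V⟫ = 0) :
    ∃ F₂ : @LinearMap ℝ ℝ _ _ (RingHom.id ℝ) n n (NormedAddCommGroup.toAddCommGroup (E := n)).toAddCommMonoid (NormedAddCommGroup.toAddCommGroup (E := n)).toAddCommMonoid (InnerProductSpace.toNormedSpace (𝕜 := ℝ) (E := n)).toModule (InnerProductSpace.toNormedSpace (𝕜 := ℝ) (E := n)).toModule, (∀ x y : n, ⟪F₂ x, y⟫ = -⟪x, F₂ y⟫) ∧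
      (∀ x ∈ zᗮ, F₂ x ∈ z) ∧ (∀ x ∈ z, F₂ x ∈ zᗮ) ∧
      (∀ U V W : n, ⟪F₂ ⁅U, V⁆, W⟫ + ⟪F₂ ⁅V, W⁆, U⟫ + ⟪F₂ ⁅W, U⁆, V⟫ = 0) ∧
      (∃ Z ∈ z, ∃ U : n, ⟪F₂ Z, U⟫ ≠ 0) :=
  stmt_8_general h2step hna z hz hsymp
end

section
/- On a 2-step nilpotent Lie algebra n with nontrivial commutator, a skew-symmetric endomorphism F of type I (preserving the orthogonal splitting v ⊕ z) whose 2-form is closed is never invertible; hence no Lorentz force of type I induces a symplectic form. -/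
open scoped RealInnerProductSpace

/-!
The commutator `c = ⁅u, v⁆ ≠ 0` is central, so `F c` lies in the center `z`. Closedness of
`⟪F·,·⟫` on `(u, v, Z)` with `Z` central leaves only `⟪F c, Z⟫ = 0`, since brackets with `Z`
vanish; taking `Z = F c` gives `F c = 0`, so `F` is not injective.
-/

section ClosedForm

variable {n : Type*} [LieRing n] [NormedAddCommGroup n] [InnerProductSpace ℝ n] {F : n → n}

lemma inner_map_lie_self_eq_zero
    (hclosed : ∀ U V W : n, ⟪F ⁅U, V⁆, W⟫ + ⟪F ⁅V, W⁆, U⟫ + ⟪F ⁅W, U⁆, V⟫ = 0) (x y : n) :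
    ⟪F ⁅x, x⁆, y⟫ = 0 := by
  have h := hclosed y y y
  rw [lie_self, ← lie_self x] at h
  linarith

lemma inner_map_lie_eq_zero_of_central
    (hclosed : ∀ U V W : n, ⟪F ⁅U, V⁆, W⟫ + ⟪F ⁅V, W⁆, U⟫ + ⟪F ⁅W, U⁆, V⟫ = 0)
    {Z : n} (hZ : ∀ y : n, ⁅Z, y⁆ = 0) (U V : n) :
    ⟪F ⁅U, V⁆, Z⟫ = 0 := by
  have hVZ : ⁅V, Z⁆ = ⁅U, U⁆ := by rw [← lie_skew, hZ, lie_self, neg_zero]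
  have hZU : ⁅Z, U⁆ = ⁅V, V⁆ := by rw [hZ, lie_self]
  have h := hclosed U V Z
  rwa [hVZ, hZU, inner_map_lie_self_eq_zero hclosed, inner_map_lie_self_eq_zero hclosed,
    add_zero, add_zero] at h

end ClosedForm

theorem stmt_9_general {n : Type*} [LieRing n]
    [NormedAddCommGroup n] [InnerProductSpace ℝ n]
    (h2step : ∀ u v w : n, ⁅⁅u, v⁆, w⁆ = 0)
    (hna : ∃ u v : n, ⁅u, v⁆ ≠ 0)
    (z : @Submodule ℝ n _ NormedAddCommGroup.toAddCommGroup.toAddCommMonoid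
      InnerProductSpace.toNormedSpace.toModule) (hz : ∀ x : n, x ∈ z ↔ ∀ y : n, ⁅x, y⁆ = 0)
    (F : @LinearMap ℝ ℝ _ _ (RingHom.id ℝ) n n
      NormedAddCommGroup.toAddCommGroup.toAddCommMonoid NormedAddCommGroup.toAddCommGroup.toAddCommMonoid
      InnerProductSpace.toNormedSpace.toModule InnerProductSpace.toNormedSpace.toModule)
    (hFz : ∀ x ∈ z, F x ∈ z)
    (hclosed : ∀ U V W : n, ⟪F ⁅U, V⁆, W⟫ + ⟪F ⁅V, W⁆, U⟫ + ⟪F ⁅W, U⁆, V⟫ = 0) :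
    ¬ Function.Bijective F := by
  obtain ⟨u, v, huv⟩ := hna
  intro hF
  have hc_central : ⁅u, v⁆ ∈ z := (hz _).2 (h2step u v)
  have hFc : ⟪F ⁅u, v⁆, F ⁅u, v⁆⟫ = 0 :=
    inner_map_lie_eq_zero_of_central hclosed ((hz _).1 (hFz _ hc_central)) u v
  have hF0 : ⟪F ⁅u, u⁆, F ⁅u, u⁆⟫ = 0 := inner_map_lie_self_eq_zero hclosed u _
  -- The Lie ring and the normed group give `n` two unrelated zeros; `⁅u, u⁆` is the Lie one,
  -- and both `F ⁅u, v⁆` and `F ⁅u, u⁆` equal the normed one.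
  apply huv
  rw [← lie_self u]
  exact hF.injective ((inner_self_eq_zero.1 hFc).trans (inner_self_eq_zero.1 hF0).symm)

/-- On a 2-step nilpotent metric Lie algebra `n = v ⊕ z` with nontrivial commutator,
a skew-symmetric endomorphism `F` of type I (preserving the orthogonal splitting
`v ⊕ z`) whose associated 2-form `⟪F·,·⟫` is closed is never invertible; hence no
Lorentz force of type I induces a symplectic form. -/
theorem stmt_9 {n : Type*} [LieRing n] [LieAlgebra ℝ n]
    [NormedAddCommGroup n] [InnerProductSpace ℝ n] [FiniteDimensional ℝ n]
    (h2step : ∀ u v w : n, ⁅⁅u, v⁆, w⁆ = 0)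
    (hna : ∃ u v : n, ⁅u, v⁆ ≠ 0)
    (z : @Submodule ℝ n _ NormedAddCommGroup.toAddCommGroup.toAddCommMonoid
      InnerProductSpace.toNormedSpace.toModule) (hz : ∀ x : n, x ∈ z ↔ ∀ y : n, ⁅x, y⁆ = 0)
    (F : @LinearMap ℝ ℝ _ _ (RingHom.id ℝ) n n
      NormedAddCommGroup.toAddCommGroup.toAddCommMonoid NormedAddCommGroup.toAddCommGroup.toAddCommMonoid
      InnerProductSpace.toNormedSpace.toModule InnerProductSpace.toNormedSpace.toModule) (hskew : ∀ x y : n, ⟪F x, y⟫ = -⟪x, F y⟫)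
    (hFv : ∀ x ∈ zᗮ, F x ∈ zᗮ) (hFz : ∀ x ∈ z, F x ∈ z)
    (hclosed : ∀ U V W : n, ⟪F ⁅U, V⁆, W⟫ + ⟪F ⁅V, W⁆, U⟫ + ⟪F ⁅W, U⁆, V⟫ = 0) :
    ¬ Function.Bijective F :=
  stmt_9_general h2step hna z hz F hFz hclosed
end

section
/- If n is a non-singular 2-step nilpotent Lie algebra, then every closed 2-form ω on n satisfies ω(Z,Z') = 0 for all Z, Z' in the center z. -/
/-! Non-singularity writes every central `Z` as a bracket `⁅u, Y⁆`. In the closedness identity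
for `(u, Y, Z')` with `Z'` central, the two terms containing `⁅Y, Z'⁆` and `⁅Z', u⁆` vanish, which
leaves `ω ⁅u, Y⁆ Z' = 0`. -/

theorem closedForm_apply_lie_central_eq_zero {R L : Type*} [CommSemiring R] [LieRing L]
    [Module R L] (ω : L →ₗ[R] L →ₗ[R] R)
    (hclosed : ∀ U V W : L, ω ⁅U, V⁆ W + ω ⁅V, W⁆ U + ω ⁅W, U⁆ V = 0)
    {Z : L} (hZ : ∀ y : L, ⁅Z, y⁆ = 0) (U V : L) : ω ⁅U, V⁆ Z = 0 := by
  have hVZ : ⁅V, Z⁆ = 0 := by rw [← lie_skew, hZ V, neg_zero]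
  simpa [hVZ, hZ U] using hclosed U V Z

theorem stmt_11_general {n : Type*} [LieRing n] [LieAlgebra ℝ n]
    (hna : ∃ u v : n, ⁅u, v⁆ ≠ 0)
    (hns : ∀ X : n, ¬(∀ y : n, ⁅X, y⁆ = 0) →
      ∀ Z : n, (∀ y : n, ⁅Z, y⁆ = 0) → ∃ Y : n, ⁅X, Y⁆ = Z)
    (ω : n →ₗ[ℝ] n →ₗ[ℝ] ℝ)
    (hclosed : ∀ U V W : n, ω ⁅U, V⁆ W + ω ⁅V, W⁆ U + ω ⁅W, U⁆ V = 0) :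
    ∀ Z : n, (∀ y : n, ⁅Z, y⁆ = 0) → ∀ Z' : n, (∀ y : n, ⁅Z', y⁆ = 0) →
      ω Z Z' = 0 := by
  intro Z hZ Z' hZ'
  obtain ⟨u, v, huv⟩ := hna
  obtain ⟨Y, rfl⟩ := hns u (fun hu => huv (hu v)) Z hZ
  exact closedForm_apply_lie_central_eq_zero ω hclosed hZ' u Y

/-- If `n` is a non-singular (non-abelian) 2-step nilpotent Lie algebra
(`ad X : n → z` surjective for every `X` outside the center `z`), then every closed
2-form `ω` on `n` satisfies `ω(Z,Z') = 0` for all `Z, Z'` in the center. -/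
theorem stmt_11 {n : Type*} [LieRing n] [LieAlgebra ℝ n] [FiniteDimensional ℝ n]
    (h2step : ∀ u v w : n, ⁅⁅u, v⁆, w⁆ = 0)
    (hna : ∃ u v : n, ⁅u, v⁆ ≠ 0)
    (hns : ∀ X : n, ¬(∀ y : n, ⁅X, y⁆ = 0) →
      ∀ Z : n, (∀ y : n, ⁅Z, y⁆ = 0) → ∃ Y : n, ⁅X, Y⁆ = Z)
    (ω : n →ₗ[ℝ] n →ₗ[ℝ] ℝ) (halt : ∀ x : n, ω x x = 0)
    (hclosed : ∀ U V W : n, ω ⁅U, V⁆ W + ω ⁅V, W⁆ U + ω ⁅W, U⁆ V = 0) :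
    ∀ Z : n, (∀ y : n, ⁅Z, y⁆ = 0) → ∀ Z' : n, (∀ y : n, ⁅Z', y⁆ = 0) →
      ω Z Z' = 0 :=
  stmt_11_general hna hns ω hclosed
end

section
/- Let n be a non-singular 2-step nilpotent Lie algebra with dim n > 3·dim z. Then every closed 2-form ω on n satisfies ω(Z,U) = 0 for all Z ∈ z and all U ∈ n. -/
/-!
For `ξ ∈ n*` the form `B_ξ(u, v) = ξ ⁅u, v⁆` is alternating, and non-singularity forces its
radical into `z` as soon as `ξ` does not vanish on `z`. An isotropic subspace `V` of `B_ξ`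
therefore has `2 dim V ≤ dim n + dim z`. The centralizer `c(W)` of any `W` has dimension at least
`dim n - dim z`, because `ad W` takes values in `z`; when `dim n > 3 dim z` it is too large to be
isotropic for any `ξ` that is nonzero on `z`, so `⁅c(W), c(W)⁆` spans a subspace containing `z`.
Closedness of `ω` gives `ω ⁅U, V⁆ W = 0` for `U, V ∈ c(W)`, hence `ω Z W = 0` for `Z ∈ z`.
-/

open Module

namespace LieAlgebra

variable {K L : Type*} [Field K] [LieRing L] [LieAlgebra K L]

def bracketForm (ξ : Dual K L) : LinearMap.BilinForm K L :=
  LinearMap.mk₂ K (fun x y => ξ ⁅x, y⁆) (by simp [add_lie]) (by simp [smul_lie])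
    (by simp [lie_add]) (by simp [lie_smul])

@[simp]
lemma bracketForm_apply (ξ : Dual K L) (x y : L) : bracketForm ξ x y = ξ ⁅x, y⁆ :=
  rfl

lemma bracketForm_isAlt (ξ : Dual K L) : (bracketForm ξ).IsAlt :=
  fun x => by simp

lemma bracketForm_orthogonal_top_le {z : Submodule K L}
    (hns : ∀ X : L, X ∉ z → ∀ Z ∈ z, ∃ Y : L, ⁅X, Y⁆ = Z)
    {ξ : Dual K L} {Z : L} (hZ : Z ∈ z) (hξZ : ξ Z ≠ 0) :
    (bracketForm ξ).orthogonal ⊤ ≤ z := by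
  intro X hX
  by_contra hXz
  obtain ⟨Y, rfl⟩ := hns X hXz Z hZ
  have hYX : ξ ⁅Y, X⁆ = 0 := hX Y trivial
  rw [← lie_skew, map_neg, neg_eq_zero] at hYX
  exact hξZ hYX

theorem le_span_lie_of_finrank_add_lt [FiniteDimensional K L] {z : Submodule K L}
    (hns : ∀ X : L, X ∉ z → ∀ Z ∈ z, ∃ Y : L, ⁅X, Y⁆ = Z) (V : Submodule K L)
    (hV : finrank K L + finrank K z < 2 * finrank K V) :
    z ≤ Submodule.span K (Set.image2 (fun u v => ⁅u, v⁆) (V : Set L) V) := by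
  intro Z hZ
  by_contra hZS
  obtain ⟨ξ, hξZ, hξS⟩ := Submodule.exists_dual_map_eq_bot_of_notMem hZS inferInstance
  have hiso : V ≤ (bracketForm ξ).orthogonal V := fun v hv u hu =>
    LinearMap.mem_ker.mp <|
      LinearMap.le_ker_iff_map.mpr hξS (Submodule.subset_span ⟨u, hu, v, hv, rfl⟩)
  have hdim := (bracketForm ξ).finrank_add_finrank_orthogonal (bracketForm_isAlt ξ).isRefl V
  have hV_le := Submodule.finrank_mono hiso
  have hrad_le := Submodule.finrank_mono
    ((inf_le_right (a := V)).trans (bracketForm_orthogonal_top_le hns hZ hξZ))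
  omega

theorem finrank_le_finrank_ker_ad_add [FiniteDimensional K L] {z : Submodule K L} {W : L}
    (hWz : ∀ y : L, ⁅W, y⁆ ∈ z) :
    finrank K L ≤ finrank K (LinearMap.ker (ad K L W)) + finrank K z := by
  have hrange : LinearMap.range (ad K L W) ≤ z := by
    rintro _ ⟨y, rfl⟩
    exact hWz y
  have := Submodule.finrank_mono hrange
  have := LinearMap.finrank_range_add_finrank_ker (ad K L W)
  omega

theorem span_lie_ker_ad_le_ker_flip {ω : L →ₗ[K] L →ₗ[K] K}
    (hclosed : ∀ U V W : L, ω ⁅U, V⁆ W + ω ⁅V, W⁆ U + ω ⁅W, U⁆ V = 0) (W : L) :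
    Submodule.span K (Set.image2 (fun u v => ⁅u, v⁆)
      (LinearMap.ker (ad K L W) : Set L) (LinearMap.ker (ad K L W))) ≤ LinearMap.ker (ω.flip W) := by
  rw [Submodule.span_le]
  rintro _ ⟨U, hU, V, hV, rfl⟩
  have hVW : ⁅V, W⁆ = 0 := by rw [← lie_skew, show ⁅W, V⁆ = 0 from hV, neg_zero]
  have hWU : ⁅W, U⁆ = 0 := hU
  simpa [hVW, hWU] using hclosed U V W

end LieAlgebra

open LieAlgebra in
theorem stmt_12_general {n : Type*} [LieRing n] [LieAlgebra ℝ n] [FiniteDimensional ℝ n]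
    (h2step : ∀ u v w : n, ⁅⁅u, v⁆, w⁆ = 0)
    (z : Submodule ℝ n) (hz : ∀ x : n, x ∈ z ↔ ∀ y : n, ⁅x, y⁆ = 0)
    (hns : ∀ X : n, X ∉ z → ∀ Z ∈ z, ∃ Y : n, ⁅X, Y⁆ = Z)
    (hdim : 3 * Module.finrank ℝ z < Module.finrank ℝ n)
    (ω : n →ₗ[ℝ] n →ₗ[ℝ] ℝ)
    (hclosed : ∀ U V W : n, ω ⁅U, V⁆ W + ω ⁅V, W⁆ U + ω ⁅W, U⁆ V = 0) :
    ∀ Z ∈ z, ∀ U : n, ω Z U = 0 := by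
  intro Z hZ W
  have hcent := finrank_le_finrank_ker_ad_add (fun y => (hz _).mpr (h2step W y))
  have hZS := le_span_lie_of_finrank_add_lt hns (LinearMap.ker (ad ℝ n W)) (by omega) hZ
  exact span_lie_ker_ad_le_ker_flip hclosed W hZS

/-- Let `n` be a non-singular 2-step nilpotent Lie algebra with center `z` and
`dim n > 3 · dim z`.  Then every closed 2-form `ω` on `n` satisfies `ω(Z,U) = 0`
for all `Z ∈ z` and all `U ∈ n`. -/
theorem stmt_12 {n : Type*} [LieRing n] [LieAlgebra ℝ n] [FiniteDimensional ℝ n]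
    (h2step : ∀ u v w : n, ⁅⁅u, v⁆, w⁆ = 0)
    (z : Submodule ℝ n) (hz : ∀ x : n, x ∈ z ↔ ∀ y : n, ⁅x, y⁆ = 0)
    (hns : ∀ X : n, X ∉ z → ∀ Z ∈ z, ∃ Y : n, ⁅X, Y⁆ = Z)
    (hdim : 3 * Module.finrank ℝ z < Module.finrank ℝ n)
    (ω : n →ₗ[ℝ] n →ₗ[ℝ] ℝ) (halt : ∀ x : n, ω x x = 0)
    (hclosed : ∀ U V W : n, ω ⁅U, V⁆ W + ω ⁅V, W⁆ U + ω ⁅W, U⁆ V = 0) :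
    ∀ Z ∈ z, ∀ U : n, ω Z U = 0 :=
  stmt_12_general h2step z hz hns hdim ω hclosed
end

section
/- A non-singular 2-step nilpotent Lie algebra n with dim n > 3·dim z admits no symplectic form: any closed 2-form on n is degenerate. -/
/-!
Suppose a closed 2-form `ω` were non-degenerate and let `K` be the `ω`-orthogonal of the
center `z`, so that `dim K = dim n - dim z`. Since every bracket lies in `z`, closedness of `ω`
forces `K` to be abelian. In a non-singular algebra, every `X ∉ z` has centralizer of
dimension exactly `dim n - dim z`, so for `X ∈ K \ z` the centralizer of `X` is `K` itself.
Hence, for any `w ∉ K` (which exists, as otherwise `n` would be abelian), the map `ad w`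
restricted to `K` has kernel inside `z`, and its image is in `z` as well; so
`dim n - dim z = dim K ≤ 2 dim z`, contradicting `dim n > 3 dim z`.
-/

open Module LieAlgebra

theorem Submodule.finrank_map_add_finrank_inf_ker {K V W : Type*} [DivisionRing K]
    [AddCommGroup V] [Module K V] [AddCommGroup W] [Module K W] [FiniteDimensional K V]
    (f : V →ₗ[K] W) (A : Submodule K V) :
    finrank K (A.map f) + finrank K ↥(A ⊓ LinearMap.ker f) = finrank K A := by
  rw [← LinearMap.range_domRestrict, ← Submodule.map_comap_subtype,
    Submodule.finrank_map_subtype_eq, ← LinearMap.ker_domRestrict,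
    LinearMap.finrank_range_add_finrank_ker]

section

variable {R L : Type*} [CommRing R] [LieRing L] [LieAlgebra R L] {z : Submodule R L}

theorem LieAlgebra.range_ad_eq_of_nonSingular (hbz : ∀ u v : L, ⁅u, v⁆ ∈ z)
    (hns : ∀ X : L, X ∉ z → ∀ Z ∈ z, ∃ Y : L, ⁅X, Y⁆ = Z) {X : L} (hX : X ∉ z) :
    LinearMap.range (ad R L X) = z := by
  apply le_antisymm
  · rintro _ ⟨Y, rfl⟩
    exact hbz X Y
  · intro Z hZ
    obtain ⟨Y, rfl⟩ := hns X hX Z hZ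
    exact ⟨Y, rfl⟩

theorem LinearMap.BilinForm.lie_eq_zero_of_mem_orthogonal {ω : LinearMap.BilinForm R L}
    (hω : ω.SeparatingLeft) (hclosed : ∀ U V W : L, ω ⁅U, V⁆ W + ω ⁅V, W⁆ U + ω ⁅W, U⁆ V = 0)
    (hbz : ∀ u v : L, ⁅u, v⁆ ∈ z) {u v : L} (hu : u ∈ ω.orthogonal z)
    (hv : v ∈ ω.orthogonal z) : ⁅u, v⁆ = 0 := by
  refine hω _ fun w => ?_
  have := hclosed u v w
  rwa [hu _ (hbz v w), hv _ (hbz w u), add_zero, add_zero] at this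

end

section

variable {R L : Type*} [Field R] [LieRing L] [LieAlgebra R L] [FiniteDimensional R L]
  {z A : Submodule R L}

theorem LieAlgebra.inf_ker_ad_le_of_abelian
    (had : ∀ X : L, X ∉ z → LinearMap.range (ad R L X) = z)
    (hA : ∀ u ∈ A, ∀ v ∈ A, ⁅u, v⁆ = 0) (hdimA : finrank R L ≤ finrank R A + finrank R z)
    {w : L} (hw : w ∉ A) : A ⊓ LinearMap.ker (ad R L w) ≤ z := by
  rintro X ⟨hXA, hXw⟩
  by_contra hXz
  have hker : finrank R (LinearMap.ker (ad R L X)) + finrank R z = finrank R L := by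
    rw [← had X hXz, add_comm, LinearMap.finrank_range_add_finrank_ker]
  have hA_le : A ≤ LinearMap.ker (ad R L X) := fun Y hY => hA X hXA Y hY
  have hA_eq : A = LinearMap.ker (ad R L X) :=
    Submodule.eq_of_le_of_finrank_le hA_le (by omega)
  apply hw
  rw [hA_eq, LinearMap.mem_ker, ad_apply, ← lie_skew, neg_eq_zero]
  exact hXw

theorem LieAlgebra.finrank_le_two_mul_of_abelian (hbz : ∀ u v : L, ⁅u, v⁆ ∈ z)
    (had : ∀ X : L, X ∉ z → LinearMap.range (ad R L X) = z)
    (hA : ∀ u ∈ A, ∀ v ∈ A, ⁅u, v⁆ = 0) (hdimA : finrank R L ≤ finrank R A + finrank R z)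
    (hA_ne : A ≠ ⊤) : finrank R A ≤ 2 * finrank R z := by
  obtain ⟨w, hw⟩ : ∃ w, w ∉ A := by
    by_contra! h
    exact hA_ne (Submodule.eq_top_iff'.mpr h)
  have hmap : A.map (ad R L w) ≤ z := by
    rintro _ ⟨Y, -, rfl⟩
    exact hbz w Y
  have hker := inf_ker_ad_le_of_abelian had hA hdimA hw
  have hrank := Submodule.finrank_map_add_finrank_inf_ker (ad R L w) A
  have hmap_le := Submodule.finrank_mono hmap
  have hker_le := Submodule.finrank_mono hker
  omega

end

/-- A non-singular 2-step nilpotent Lie algebra `n` with center `z` and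
`dim n > 3 · dim z` admits no symplectic form: every closed 2-form on `n` is
degenerate. -/
theorem stmt_13 {n : Type*} [LieRing n] [LieAlgebra ℝ n] [FiniteDimensional ℝ n]
    (h2step : ∀ u v w : n, ⁅⁅u, v⁆, w⁆ = 0)
    (z : Submodule ℝ n) (hz : ∀ x : n, x ∈ z ↔ ∀ y : n, ⁅x, y⁆ = 0)
    (hns : ∀ X : n, X ∉ z → ∀ Z ∈ z, ∃ Y : n, ⁅X, Y⁆ = Z)
    (hdim : 3 * Module.finrank ℝ z < Module.finrank ℝ n) :
    ∀ ω : n →ₗ[ℝ] n →ₗ[ℝ] ℝ, (∀ x : n, ω x x = 0) →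
      (∀ U V W : n, ω ⁅U, V⁆ W + ω ⁅V, W⁆ U + ω ⁅W, U⁆ V = 0) →
      ∃ X : n, X ≠ 0 ∧ ∀ Y : n, ω X Y = 0 := by
  intro ω _ hclosed
  by_contra hdeg
  have hω : ω.SeparatingLeft := fun X hX => by_contra fun h => hdeg ⟨X, h, hX⟩
  have hbz : ∀ u v : n, ⁅u, v⁆ ∈ z := fun u v => (hz _).mpr (h2step u v)
  set K := LinearMap.BilinForm.orthogonal ω z
  have hK : finrank ℝ K = finrank ℝ n - finrank ℝ z :=
    LinearMap.BilinForm.finrank_orthogonal (.ofSeparatingLeft hω) z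
  have hKab : ∀ u ∈ K, ∀ v ∈ K, ⁅u, v⁆ = 0 := fun u hu v hv =>
    LinearMap.BilinForm.lie_eq_zero_of_mem_orthogonal hω hclosed hbz hu hv
  have hK_ne : K ≠ ⊤ := by
    intro hK_top
    have hz_top : z = ⊤ := Submodule.eq_top_iff'.mpr fun x =>
      (hz x).mpr fun y => hKab x (hK_top ▸ Submodule.mem_top) y (hK_top ▸ Submodule.mem_top)
    rw [hz_top, finrank_top] at hdim
    omega
  have hK_le := finrank_le_two_mul_of_abelian hbz (fun X => range_ad_eq_of_nonSingular hbz hns)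
    hKab (by omega) hK_ne
  omega
end
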